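/- Let Z_C ∈ {0,1}^{N_C × K_C} and Z_P ∈ {0,1}^{N_P × K_P} be membership matrices, B ∈ ℝ^{K_C × K_P} with nonnegative entries, 𝒜 = Z_C B Z_P^T, τ_c, τ_p > 0, and let ℒ = 𝒟_C^{-1/2} 𝒜 𝒟_P^{-1/2} be the population regularized graph Laplacian, where [𝒟_C]_{ii} = Σ_j 𝒜_{ij} + τ_c and [𝒟_P]_{jj} = Σ_i 𝒜_{ij} + τ_p. Then ℒ = Z_C B_L Z_P^T, where B_L ∈ ℝ^{K_C × K_P} is defined by (B_L)_{uv} = B_{uv} / sqrt(d_u^C d_v^P), with d_u^C = Σ_{w=1}^{K_P} n_w^P B_{uw} + τ_c and d_v^P = Σ_{w=1}^{K_C} n_w^C B_{wv} + τ_p, and n_w^C, n_w^P the sizes of citizen block w and post block w. -/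
import Mathlib


open Matrix BigOperators

/-- The population regularized graph Laplacian
`ℒ = 𝒟_C^{-1/2} 𝒜 𝒟_P^{-1/2}` of the NC-ScBM factors as `Z_C B_L Z_Pᵀ`,
where `(B_L)_{uv} = B_{uv} / √(d_u^C d_v^P)` with
`d_u^C = Σ_w n_w^P B_{uw} + τ_c` and `d_v^P = Σ_w n_w^C B_{wv} + τ_p`. -/
theorem population_laplacian_block_factorization
    (NC NP KC KP : ℕ)
    (ZC : Matrix (Fin NC) (Fin KC) ℝ)
    (ZP : Matrix (Fin NP) (Fin KP) ℝ)
    (hC01 : ∀ i k, ZC i k = 0 ∨ ZC i k = 1)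
    (hCrow : ∀ i, ∃! k, ZC i k = 1)
    (hCcol : ∀ k, ∃ i, ZC i k = 1)
    (hP01 : ∀ j k, ZP j k = 0 ∨ ZP j k = 1)
    (hProw : ∀ j, ∃! k, ZP j k = 1)
    (hPcol : ∀ k, ∃ j, ZP j k = 1)
    (B : Matrix (Fin KC) (Fin KP) ℝ) (hB : ∀ u v, 0 ≤ B u v)
    (𝒜 : Matrix (Fin NC) (Fin NP) ℝ) (h𝒜 : 𝒜 = ZC * B * ZPᵀ)
    (τc τp : ℝ) (hτc : 0 < τc) (hτp : 0 < τp)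
    (dC : Fin NC → ℝ) (dP : Fin NP → ℝ)
    (hdC : ∀ i, dC i = (∑ j, 𝒜 i j) + τc)
    (hdP : ∀ j, dP j = (∑ i, 𝒜 i j) + τp)
    (ℒ : Matrix (Fin NC) (Fin NP) ℝ)
    (hℒ : ℒ = Matrix.diagonal (fun i => (Real.sqrt (dC i))⁻¹) * 𝒜 *
        Matrix.diagonal (fun j => (Real.sqrt (dP j))⁻¹))
    (nC : Fin KC → ℕ) (nP : Fin KP → ℕ)
    (hnC : ∀ u, nC u = (Finset.univ.filter fun i => ZC i u = 1).card)
    (hnP : ∀ v, nP v = (Finset.univ.filter fun j => ZP j v = 1).card) :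
    ℒ = ZC * (Matrix.of fun u v =>
        B u v / Real.sqrt (((∑ w, (nP w : ℝ) * B u w) + τc) *
          ((∑ w, (nC w : ℝ) * B w v) + τp))) * ZPᵀ := by
  choose c hc hc' using hCrow
  choose p hp hp' using hProw
  have hZC : ∀ i k, ZC i k = if k = c i then 1 else 0 := by
    intro i k
    by_cases h : k = c i
    · subst h; simp [hc i]
    · rcases hC01 i k with h0 | h1
      · simp [h, h0]
      · exact absurd (hc' i k h1) h
  have hZP : ∀ j v, ZP j v = if v = p j then 1 else 0 := by
    intro j v
    by_cases h : v = p j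
    · subst h; simp [hp j]
    · rcases hP01 j v with h0 | h1
      · simp [h, h0]
      · exact absurd (hp' j v h1) h
  have hcardP : ∀ w, (∑ j : Fin NP, (if w = p j then (1:ℝ) else 0)) = (nP w : ℝ) := by
    intro w
    rw [Finset.sum_boole, hnP w]
    congr 2
    ext j
    simp only [Finset.mem_filter, Finset.mem_univ, true_and, hZP j w]
    by_cases h : w = p j <;> simp [h]
  have hcardC : ∀ w, (∑ i : Fin NC, (if w = c i then (1:ℝ) else 0)) = (nC w : ℝ) := by
    intro w
    rw [Finset.sum_boole, hnC w]
    congr 2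
    ext i
    simp only [Finset.mem_filter, Finset.mem_univ, true_and, hZC i w]
    by_cases h : w = c i <;> simp [h]
  have hA : ∀ i j, 𝒜 i j = B (c i) (p j) := by
    intro i j
    rw [h𝒜]
    simp only [Matrix.mul_apply, Matrix.transpose_apply, hZC, hZP, ite_mul, mul_ite,
      one_mul, mul_one, zero_mul, mul_zero, Finset.sum_ite_eq', Finset.mem_univ, if_true]
  have hdC' : ∀ i, dC i = (∑ w, (nP w : ℝ) * B (c i) w) + τc := by
    intro i
    rw [hdC]
    congr 1
    have : ∀ j, 𝒜 i j = ∑ w, (if w = p j then (1:ℝ) else 0) * B (c i) w := by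
      intro j
      simp [hA i j, ite_mul, Finset.sum_ite_eq']
    simp_rw [this]
    rw [Finset.sum_comm]
    refine Finset.sum_congr rfl fun w _ => ?_
    rw [← Finset.sum_mul, hcardP w]
  have hdP' : ∀ j, dP j = (∑ w, (nC w : ℝ) * B w (p j)) + τp := by
    intro j
    rw [hdP]
    congr 1
    have : ∀ i, 𝒜 i j = ∑ w, (if w = c i then (1:ℝ) else 0) * B w (p j) := by
      intro i
      simp [hA i j, ite_mul, Finset.sum_ite_eq']
    simp_rw [this]
    rw [Finset.sum_comm]
    refine Finset.sum_congr rfl fun w _ => ?_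
    rw [← Finset.sum_mul, hcardC w]
  have hdCpos : ∀ i, 0 < dC i := by
    intro i
    rw [hdC' i]
    have : 0 ≤ ∑ w, (nP w : ℝ) * B (c i) w :=
      Finset.sum_nonneg fun w _ => mul_nonneg (Nat.cast_nonneg _) (hB _ _)
    linarith
  have hdPpos : ∀ j, 0 < dP j := by
    intro j
    rw [hdP' j]
    have : 0 ≤ ∑ w, (nC w : ℝ) * B w (p j) :=
      Finset.sum_nonneg fun w _ => mul_nonneg (Nat.cast_nonneg _) (hB _ _)
    linarith
  ext i j
  have hRHS : (ZC * (Matrix.of fun u v =>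
        B u v / Real.sqrt (((∑ w, (nP w : ℝ) * B u w) + τc) *
          ((∑ w, (nC w : ℝ) * B w v) + τp))) * ZPᵀ) i j
      = B (c i) (p j) / Real.sqrt (dC i * dP j) := by
    rw [hdC' i, hdP' j]
    simp only [Matrix.mul_apply, Matrix.transpose_apply, hZC, hZP, ite_mul, mul_ite,
      one_mul, mul_one, zero_mul, mul_zero, Finset.sum_ite_eq', Finset.mem_univ, if_true,
      Matrix.of_apply]
  rw [hRHS, hℒ]
  simp only [Matrix.mul_diagonal, Matrix.diagonal_mul]
  rw [hA i j, Real.sqrt_mul (le_of_lt (hdCpos i)), div_eq_mul_inv, mul_inv]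
  ring
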